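/- Assume: (a) ω = cf(μ) < μ < 2^ω; (b) (μ_n : n < ω) is a sequence of regular cardinals with supremum μ and J is an ideal on ω extending the ideal of finite sets; (c) (f_α : α < λ) is a sequence witnessing tcf(∏_{n<ω} μ_n, J) = λ; (d) μ ≤ ν < λ; (e) for every A ⊆ λ with |A| = ℵ₁ one has |{f_α(n) : α ∈ A, n < ω}| = ℵ₁. Then 𝔤𝔭 ≠ ν. -/

import Mathlib

open Cardinal Set

universe u

/-- `C` is a club subset of the ordinal `δ`: it consists of ordinals below `δ`,
is unbounded in `δ`, and contains every limit ordinal `β < δ` with `sup (C ∩ β) = β`. -/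
def IsClubIn (δ : Ordinal) (C : Set Ordinal) : Prop :=
  C ⊆ Set.Iio δ ∧ (∀ a < δ, ∃ b ∈ C, a ≤ b) ∧
    ∀ β < δ, Order.IsSuccLimit β → sSup (C ∩ Set.Iio β) = β → β ∈ C

/-- `A` is a set of ordinals of cardinality `c` (witnessed by a bijective
enumeration of `A` by the ordinals below `c.ord`). -/
def HasCard (A : Set Ordinal.{u}) (c : Cardinal.{u}) : Prop :=
  ∃ e : Ordinal → Ordinal, Set.BijOn e (Set.Iio c.ord) A

/-- An ideal on the set of ordinals below `θ`. -/
structure IdealOn (θ : Ordinal) where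
  sets : Set (Set Ordinal)
  subset_Iio : ∀ A ∈ sets, A ⊆ Set.Iio θ
  mem_of_subset : ∀ A ∈ sets, ∀ B ⊆ A, B ∈ sets
  union_mem : ∀ A ∈ sets, ∀ B ∈ sets, A ∪ B ∈ sets
  proper : Set.Iio θ ∉ sets

/-- `(f α : α < lam.ord)` is a `<_J`-increasing, `<_J`-cofinal sequence in the
product `∏_{i<θ} μs i`, witnessing `tcf (∏_{i<θ} μs i, J) = lam`. -/
def IsTcfWitness (θ : Ordinal) (J : IdealOn θ) (μs : Ordinal → Cardinal)
    (lam : Cardinal) (f : Ordinal → Ordinal → Ordinal) : Prop :=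
  (∀ α < lam.ord, ∀ i < θ, f α i < (μs i).ord) ∧
  (∀ α β, α < β → β < lam.ord → {i | i < θ ∧ f β i ≤ f α i} ∈ J.sets) ∧
  (∀ g : Ordinal → Ordinal, (∀ i < θ, g i < (μs i).ord) →
    ∃ α < lam.ord, {i | i < θ ∧ f α i ≤ g i} ∈ J.sets)

/-- The Galvin cardinal characteristic `𝔤𝔭`: the least cardinal `κ` such that every
family `{C α : α < κ⁺}` of clubs of `ω₁` has a subfamily of size `ℵ₁`
whose intersection is a club of `ω₁`. -/
noncomputable def gp : Cardinal.{u} :=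
  sInf {κ : Cardinal.{u} | ∀ C : Ordinal.{u} → Set Ordinal.{u},
    (∀ α < (Order.succ κ).ord, IsClubIn (Cardinal.aleph 1).ord (C α)) →
    ∃ b : Ordinal.{u} → Ordinal.{u},
      (∀ β < (Cardinal.aleph 1).ord, b β < (Order.succ κ).ord) ∧
      Set.InjOn b (Set.Iio (Cardinal.aleph 1).ord) ∧
      IsClubIn (Cardinal.aleph 1).ord (⋂ β ∈ Set.Iio (Cardinal.aleph 1).ord, C (b β))}

/-!
If `𝔤𝔭 = ν`, then `ν` has the Galvin property while every `μs n` fails it: `μs n ≤ μ ≤ ν`, and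
`μs n ≠ μ` because `μs n` is regular and `μ` is singular. Fix, for each `n`, a family `D n` of
clubs indexed below `(μs n)⁺` with no club subfamily of size `ℵ₁`, and put
`C α = ⋂ n, D n (f α n)` for `α < ν⁺`. Some `ℵ₁` of the `C α`, say for `α ∈ A`, have a club
intersection, and it lies inside `D n γ` for every `γ ∈ {f α n | α ∈ A}`; as `D n` is bad, each
of these value sets is countable, so `{f α n | α ∈ A, n < ω}` is countable, contradicting the
assumption on `f`.
-/

open Order

section Club

variable {δ : Ordinal.{u}}

theorem isClubIn_iff {C : Set Ordinal.{u}} :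
    IsClubIn δ C ↔ C ⊆ Iio δ ∧ IsClub (Subtype.val ⁻¹' C : Set (Iio δ)) := by
  refine ⟨fun ⟨hCδ, hcof, hclosed⟩ => ⟨hCδ, ⟨?_, ?_⟩⟩, fun ⟨hCδ, hC⟩ => ⟨hCδ, ?_, ?_⟩⟩
  · rw [dirSupClosed_iff_of_linearOrder]
    intro d hdC ⟨x, hx⟩ a ha
    by_cases had : a ∈ d
    · exact hdC had
    have hlt : ∀ y ∈ d, y < a := fun y hy => (ha.1 hy).lt_of_ne (ne_of_mem_of_not_mem hy had)
    have hbdd : BddAbove (C ∩ Iio a.1) := ⟨a.1, fun y hy => le_of_lt hy.2⟩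
    have hsup : sSup (C ∩ Iio a.1) = a.1 := by
      refine le_antisymm (csSup_le' fun y hy => le_of_lt hy.2) (le_of_forall_lt fun c hc => ?_)
      obtain ⟨y, hyd, hcy, -⟩ := ha.exists_between (b := ⟨c, hc.trans a.2⟩) hc
      exact lt_csSup_of_lt hbdd ⟨hdC hyd, hlt y hyd⟩ hcy
    have hlim : IsSuccLimit a.1 := by
      by_contra hlim
      have hne : (C ∩ Iio a.1).Nonempty := ⟨x.1, hdC hx, hlt x hx⟩
      have hmem := csSup_mem_of_not_isSuccLimit hne hbdd (by rwa [hsup])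
      rw [hsup] at hmem
      exact lt_irrefl a.1 hmem.2
    exact hclosed a.1 a.2 hlim hsup
  · intro a
    obtain ⟨b, hb, hab⟩ := hcof a.1 a.2
    exact ⟨⟨b, hCδ hb⟩, hb, hab⟩
  · intro a ha
    obtain ⟨b, hb, hab⟩ := hC.isCofinal ⟨a, ha⟩
    exact ⟨b.1, hb, hab⟩
  · intro β hβ hlim hsup
    obtain ⟨x, hxC, hxβ⟩ : (C ∩ Iio β).Nonempty := by
      by_contra hempty
      rw [not_nonempty_iff_eq_empty.1 hempty, csSup_empty] at hsup
      exact hlim.ne_bot hsup.symm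
    refine hC.isLUB_mem (t := {y : Iio δ | y.1 ∈ C ∩ Iio β}) (fun y hy => hy.1)
      ⟨⟨x, hxβ.trans hβ⟩, hxC, hxβ⟩ (x := ⟨β, hβ⟩)
      ⟨fun y hy => (le_of_lt hy.2 : y.1 ≤ β), fun b hb => ?_⟩
    change β ≤ b.1
    rw [← hsup]
    exact csSup_le' fun y hy => hb (a := ⟨y, hy.2.trans hβ⟩) hy

theorem IsClubIn.iInter_of_countable {ι : Type*} [Countable ι] [Nonempty ι]
    {K : ι → Set Ordinal.{u}} (hδ : δ.cof ≠ ℵ₀) (hK : ∀ i, IsClubIn δ (K i)) :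
    IsClubIn δ (⋂ i, K i) := by
  refine isClubIn_iff.2 ⟨(iInter_subset _ (Classical.arbitrary ι)).trans (hK _).1, ?_⟩
  rw [preimage_iInter]
  refine IsClub.iInter_of_countable ?_ fun i => (isClubIn_iff.1 (hK i)).2
  rwa [Ordinal.cof_Iio, ← Ordinal.lift_cof, Ne, lift_eq_aleph0]

theorem IsClubIn.biInter_of_superset {ι : Type*} {s : Set ι} {K : ι → Set Ordinal.{u}}
    {E : Set Ordinal.{u}} (hs : s.Nonempty) (hK : ∀ i ∈ s, IsClubIn δ (K i))
    (hE : IsClubIn δ E) (hEK : E ⊆ ⋂ i ∈ s, K i) : IsClubIn δ (⋂ i ∈ s, K i) := by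
  obtain ⟨i, hi⟩ := hs
  refine isClubIn_iff.2 ⟨(biInter_subset_of_mem hi).trans (hK i hi).1, ?_, ?_⟩
  · simp only [preimage_iInter]
    exact DirSupClosed.iInter fun i => DirSupClosed.iInter fun hi =>
      (isClubIn_iff.1 (hK i hi)).2.dirSupClosed
  · exact (isClubIn_iff.1 hE).2.isCofinal.mono (preimage_mono hEK)

end Club

theorem hasCard_iff_mk_eq {A : Set Ordinal.{u}} {c : Cardinal.{u}} :
    HasCard A c ↔ #A = lift.{u + 1} c := by
  rw [← card_ord c, ← Cardinal.mk_Iio_ordinal, card_ord]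
  constructor
  · rintro ⟨e, he⟩
    exact (mk_congr he.equiv).symm
  · intro h
    obtain ⟨g⟩ := Cardinal.eq.1 h.symm
    refine ⟨fun β => if hβ : β ∈ Iio c.ord then g ⟨β, hβ⟩ else 0, fun β hβ => ?_, ?_, ?_⟩
    · simp only [dif_pos hβ]
      exact (g _).2
    · intro β hβ γ hγ hβγ
      simp only [dif_pos hβ, dif_pos hγ] at hβγ
      exact congrArg Subtype.val (g.injective (Subtype.ext hβγ))
    · intro y hy
      exact ⟨g.symm ⟨y, hy⟩, (g.symm ⟨y, hy⟩).2, by simp⟩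

theorem HasCard.not_countable {A : Set Ordinal.{u}} (hA : HasCard A (aleph 1)) : ¬A.Countable := by
  rw [← le_aleph0_iff_set_countable, hasCard_iff_mk_eq.1 hA, not_le, lift_aleph,
    Ordinal.lift_one]
  exact aleph0_lt_aleph_one

theorem exists_subset_hasCard_aleph_one {V : Set Ordinal.{u}} (hV : ¬V.Countable) :
    ∃ W ⊆ V, HasCard W (aleph 1) := by
  rw [← le_aleph0_iff_set_countable, not_le, ← aleph_one_le_iff,
    le_mk_iff_exists_subset] at hV
  obtain ⟨W, hWV, hW⟩ := hV
  exact ⟨W, hWV, hasCard_iff_mk_eq.2 (by rw [hW, lift_aleph, Ordinal.lift_one])⟩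

def HasClubSubfamily (κ : Cardinal.{u}) (C : Ordinal.{u} → Set Ordinal.{u}) : Prop :=
  ∃ b : Ordinal.{u} → Ordinal.{u}, (∀ β < (aleph 1).ord, b β < (succ κ).ord) ∧
    InjOn b (Iio (aleph 1).ord) ∧ IsClubIn (aleph 1).ord (⋂ β ∈ Iio (aleph 1).ord, C (b β))

-- Unfolded, `gp` is literally `sInf {κ | GalvinProperty κ}`.
def GalvinProperty (κ : Cardinal.{u}) : Prop :=
  ∀ C : Ordinal.{u} → Set Ordinal.{u},
    (∀ α < (succ κ).ord, IsClubIn (aleph 1).ord (C α)) → HasClubSubfamily κ C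

theorem galvinProperty_gp (h : gp.{u} ≠ 0) : GalvinProperty gp.{u} :=
  csInf_mem (s := {κ | GalvinProperty κ}) <| nonempty_iff_ne_empty.2 fun hS =>
    h <| show sInf {κ | GalvinProperty κ} = 0 by rw [hS, Cardinal.sInf_empty]

theorem not_galvinProperty_of_lt_gp {κ : Cardinal.{u}} (h : κ < gp.{u}) : ¬GalvinProperty κ :=
  fun hκ => notMem_of_lt_csInf' h hκ

theorem HasClubSubfamily.of_not_countable {κ : Cardinal.{u}} {C : Ordinal.{u} → Set Ordinal.{u}}
    {V E : Set Ordinal.{u}} (hVκ : V ⊆ Iio (succ κ).ord) (hV : ¬V.Countable)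
    (hC : ∀ v ∈ V, IsClubIn (aleph 1).ord (C v)) (hE : IsClubIn (aleph 1).ord E)
    (hEV : E ⊆ ⋂ v ∈ V, C v) : HasClubSubfamily κ C := by
  obtain ⟨W, hWV, b, hb⟩ := exists_subset_hasCard_aleph_one hV
  have hbV : ∀ β ∈ Iio (aleph 1).ord, b β ∈ V := fun β hβ => hWV (hb.mapsTo hβ)
  refine ⟨b, fun β hβ => hVκ (hbV β hβ), hb.injOn, ?_⟩
  refine IsClubIn.biInter_of_superset ⟨0, ?_⟩ (fun β hβ => hC _ (hbV β hβ)) hE ?_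
  · exact (isSuccLimit_ord (aleph0_le_aleph 1)).bot_lt
  · intro x hx
    have hxV := hEV hx
    simp only [mem_iInter] at hxV ⊢
    exact fun β hβ => hxV _ (hbV β hβ)

theorem cof_ord_aleph_one_ne_aleph0 : (aleph 1).ord.cof ≠ ℵ₀ := by
  rw [isRegular_aleph_one.cof_ord]
  exact aleph0_lt_aleph_one.ne'

theorem exists_countable_values_of_galvinProperty {ν : Cardinal.{u}} {κ : ℕ → Cardinal.{u}}
    (hν : GalvinProperty ν) (hκ : ∀ n, ¬GalvinProperty (κ n)) {f : Ordinal.{u} → ℕ → Ordinal.{u}}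
    (hf : ∀ α < (succ ν).ord, ∀ n, f α n < (succ (κ n)).ord) :
    ∃ A ⊆ Iio (succ ν).ord, HasCard A (aleph 1) ∧ (⋃ n, (f · n) '' A).Countable := by
  have hbad : ∀ n, ∃ D : Ordinal.{u} → Set Ordinal.{u},
      (∀ α < (succ (κ n)).ord, IsClubIn (aleph 1).ord (D α)) ∧ ¬HasClubSubfamily (κ n) D := by
    intro n
    simpa only [GalvinProperty, not_forall, exists_prop] using hκ n
  choose D hDclub hDbad using hbad
  have hclub : ∀ α < (succ ν).ord, IsClubIn (aleph 1).ord (⋂ n, D n (f α n)) := fun α hα =>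
    IsClubIn.iInter_of_countable cof_ord_aleph_one_ne_aleph0 fun n => hDclub n _ (hf α hα n)
  obtain ⟨b, hbν, hbinj, hbclub⟩ := hν _ hclub
  refine ⟨b '' Iio (aleph 1).ord, ?_, ⟨b, hbinj.bijOn_image⟩, countable_iUnion fun n => ?_⟩
  · rintro _ ⟨β, hβ, rfl⟩
    exact hbν β hβ
  by_contra hcount
  refine hDbad n (HasClubSubfamily.of_not_countable ?_ hcount ?_ hbclub ?_)
  · rintro _ ⟨_, ⟨β, hβ, rfl⟩, rfl⟩
    exact hf _ (hbν β hβ) n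
  · rintro _ ⟨_, ⟨β, hβ, rfl⟩, rfl⟩
    exact hDclub n _ (hf _ (hbν β hβ) n)
  · intro x hx
    simp only [mem_iInter] at hx ⊢
    rintro _ ⟨_, ⟨β, hβ, rfl⟩, rfl⟩
    exact hx β hβ n

theorem gp_ne_of_scale_pp_general (μ ν lam : Cardinal.{u}) (μs : Ordinal.{u} → Cardinal.{u})
    (J : IdealOn Ordinal.omega0.{u}) (f : Ordinal.{u} → Ordinal.{u} → Ordinal.{u})
    (hcof : μ.ord.cof = Cardinal.aleph0)
    (hsing : Cardinal.aleph0 < μ)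
    (hreg : ∀ i < Ordinal.omega0, (μs i).IsRegular)
    (hsup : sSup (μs '' Set.Iio Ordinal.omega0) = μ)
    (hf : IsTcfWitness Ordinal.omega0 J μs lam f)
    (hμν : μ ≤ ν) (hνlam : ν < lam)
    (hA : ∀ A : Set Ordinal.{u}, A ⊆ Set.Iio lam.ord →
      HasCard A (Cardinal.aleph 1) →
      HasCard {x : Ordinal | ∃ α ∈ A, ∃ i < Ordinal.omega0, f α i = x} (Cardinal.aleph 1)) :
    gp ≠ ν := by
  intro hgp
  subst hgp
  have hμs : ∀ n : ℕ, μs n < gp := by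
    intro n
    have hn := Ordinal.natCast_lt_omega0 n
    have hle : μs n ≤ μ := hsup ▸ le_csSup bddAbove_of_small (mem_image_of_mem μs hn)
    have hne : μs n ≠ μ := fun h => hsing.ne (hcof.symm.trans (h ▸ (hreg n hn).cof_ord))
    exact (hle.lt_of_ne hne).trans_le hμν
  have hsucc : (succ gp).ord ≤ lam.ord := ord_le_ord.2 (succ_le_of_lt hνlam)
  obtain ⟨A, hAν, hAcard, hcount⟩ := exists_countable_values_of_galvinProperty
    (galvinProperty_gp (aleph0_pos.trans (hsing.trans_le hμν)).ne')
    (fun n => not_galvinProperty_of_lt_gp (hμs n)) (f := fun α n => f α n) fun α hα n =>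
      (hf.1 α (hα.trans_le hsucc) n (Ordinal.natCast_lt_omega0 n)).trans_le
        (ord_le_ord.2 (le_succ _))
  refine (hA A (hAν.trans (Iio_subset_Iio hsucc)) hAcard).not_countable (hcount.mono ?_)
  rintro _ ⟨α, hα, i, hi, rfl⟩
  obtain ⟨n, rfl⟩ := Ordinal.lt_omega0.1 hi
  exact mem_iUnion.2 ⟨n, α, hα, rfl⟩

/-- Assume `ω = cf μ < μ < 2^ω`, `(μs n : n < ω)` is a sequence of
regular cardinals with supremum `μ`, `J` is an ideal on `ω` extending the ideal of
finite (= bounded) sets, `f` witnesses `tcf (∏_{n<ω} μs n, J) = lam`, `μ ≤ ν < lam`, and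
every `A ⊆ lam` of size `ℵ₁` satisfies `|{f α n : α ∈ A, n < ω}| = ℵ₁`. Then `𝔤𝔭 ≠ ν`. -/
theorem gp_ne_of_scale_pp (μ ν lam : Cardinal.{u}) (μs : Ordinal.{u} → Cardinal.{u})
    (J : IdealOn Ordinal.omega0.{u}) (f : Ordinal.{u} → Ordinal.{u} → Ordinal.{u})
    (hcof : μ.ord.cof = Cardinal.aleph0)
    (hsing : Cardinal.aleph0 < μ)
    (hcont : μ < 2 ^ Cardinal.aleph0)
    (hreg : ∀ i < Ordinal.omega0, (μs i).IsRegular)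
    (hsup : sSup (μs '' Set.Iio Ordinal.omega0) = μ)
    (hJ : ∀ δ < Ordinal.omega0, Set.Iio δ ∈ J.sets)
    (hf : IsTcfWitness Ordinal.omega0 J μs lam f)
    (hμν : μ ≤ ν) (hνlam : ν < lam)
    (hA : ∀ A : Set Ordinal.{u}, A ⊆ Set.Iio lam.ord →
      HasCard A (Cardinal.aleph 1) →
      HasCard {x : Ordinal | ∃ α ∈ A, ∃ i < Ordinal.omega0, f α i = x} (Cardinal.aleph 1)) :
    gp ≠ ν :=
  gp_ne_of_scale_pp_general μ ν lam μs J f hcof hsing hreg hsup hf hμν hνlam hA
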